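/- arXiv:2302.00959 — 2 statements merged into one kernel-verified Lean document; each statement's English description precedes it below -/
import Mathlib

section
/- Let b, c, d be nonnegative integers and let p be an integer with p ≤ 0 and 2d ≤ b+c+1. Then E(1,b,c,d,p) = C(b+c, b) − ∑_{i=0}^{d+p−1} C(b+c−2(i−p)−1, b+2p−i−1) · ( C(2(i−p), i−2p) − C(2(i−p), i−1) ), where the sum is empty if d+p ≤ 0. (This follows from the reflection principle for lattice paths.) -/
/-!
The intrusive block of `Q(1,b,c,d,p)` is the upper unitriangular Toeplitz matrix `T` of central
binomial coefficients `C(2(j-i), j-i)`, and for `p ≤ 0` the lateral row `C(2j+1, j+p)` factors as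
`s T`, where `s_N = C(2N, N-p) - C(2N, N+p-1)` are ballot numbers (reflection principle).
Subtracting `s` times the intrusive columns from the lateral column leaves a block triangular matrix, so
`E(1,b,c,d,p) = C(b+c,b) - ∑_N s_N v_N` with `v_N = C(b+c-2N-1, c-N-p)` the lateral column;
since `s_N = 0` for `N < -p`, this is the stated sum after the shift `N = i - p`.
-/

open Finset

noncomputable section

/-- Binomial coefficient with integer arguments, equal to `0` whenever `k < 0` or `k > n`. -/
def ibinom (n k : ℤ) : ℚ :=
  if 0 ≤ k ∧ k ≤ n then (n.toNat.choose k.toNat : ℚ) else 0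

/-- The Pochhammer symbol (rising factorial) `x (x+1) ⋯ (x+n-1)`. -/
def poch (x : ℚ) (n : ℕ) : ℚ := (ascPochhammer ℚ n).eval x

/-- MacMahon's product `M(a,b,c)`. -/
def macmahon (a b c : ℕ) : ℚ :=
  ∏ i ∈ Finset.range a,
    ((Nat.factorial i : ℚ) * (Nat.factorial (b + c + i) : ℚ)) /
      ((Nat.factorial (b + i) : ℚ) * (Nat.factorial (c + i) : ℚ))

/-- The matrix `Q(a,b,c,d,p)` (with `1`-based indices `i, j ∈ {1, …, a+d}`):
rows/columns with index `≤ a` are lateral, the rest are intrusive. -/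
def Qmat (a b c d : ℕ) (p : ℤ) : Matrix (Fin (a + d)) (Fin (a + d)) ℚ :=
  Matrix.of fun i j =>
    if (i : ℕ) < a then
      if (j : ℕ) < a then
        ibinom ((b : ℤ) + c) ((c : ℤ) - (((i : ℕ) : ℤ) + 1) + (((j : ℕ) : ℤ) + 1))
      else
        ibinom (2 * (((j : ℕ) : ℤ) - a + 1) - 1)
          ((((j : ℕ) : ℤ) - a + 1) - (((i : ℕ) : ℤ) + 1) + p)
    else
      if (j : ℕ) < a then
        ibinom ((b : ℤ) + c - 2 * (((i : ℕ) : ℤ) - a + 1) + 1)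
          ((c : ℤ) - (((i : ℕ) : ℤ) - a + 1) + (((j : ℕ) : ℤ) + 1) - p)
      else
        ibinom (2 * (((j : ℕ) : ℤ) - ((i : ℕ) : ℤ))) (((j : ℕ) : ℤ) - ((i : ℕ) : ℤ))

/-- `E(a,b,c,d,p) = det Q(a,b,c,d,p)`, the signed count of lozenge tilings of the
`(a,b,c)`-hexagon with an even intrusion of length `d` at position `p`. -/
def E (a b c d : ℕ) (p : ℤ) : ℚ := (Qmat a b c d p).det

lemma ibinom_of_neg {n k : ℤ} (hk : k < 0) : ibinom n k = 0 :=
  if_neg (by omega)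

lemma ibinom_of_lt {n k : ℤ} (hnk : n < k) : ibinom n k = 0 :=
  if_neg (by omega)

lemma ibinom_natCast (m j : ℕ) : ibinom m j = m.choose j := by
  unfold ibinom
  split_ifs with h
  · simp
  · rw [Nat.choose_eq_zero_of_lt (by omega), Nat.cast_zero]

lemma ibinom_symm (n k : ℤ) : ibinom n (n - k) = ibinom n k := by
  unfold ibinom
  by_cases h : 0 ≤ k ∧ k ≤ n
  · rw [if_pos (by omega), if_pos h, show (n - k).toNat = n.toNat - k.toNat by omega,
      Nat.choose_symm (by omega)]
  · rw [if_neg (by omega), if_neg h]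

lemma ibinom_succ {n : ℤ} (hn : 0 ≤ n) (k : ℤ) :
    ibinom (n + 1) k = ibinom n k + ibinom n (k - 1) := by
  lift n to ℕ using hn
  rcases lt_or_ge k 0 with hk | hk
  · rw [ibinom_of_neg hk, ibinom_of_neg hk, ibinom_of_neg (by omega), add_zero]
  lift k to ℕ using hk
  have hsucc := ibinom_natCast (n + 1) k
  push_cast at hsucc
  rw [hsucc, ibinom_natCast]
  cases k with
  | zero => simp [ibinom_of_neg]
  | succ j =>
    rw [Nat.cast_succ, add_sub_cancel_right, ibinom_natCast, Nat.choose_succ_succ', Nat.cast_add,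
      add_comm]

lemma ibinom_add_two {n : ℤ} (hn : 0 ≤ n) (k : ℤ) :
    ibinom (n + 2) k = ibinom n k + 2 * ibinom n (k - 1) + ibinom n (k - 2) := by
  rw [show n + 2 = n + 1 + 1 by ring, ibinom_succ (by omega), ibinom_succ hn, ibinom_succ hn,
    show k - 1 - 1 = k - 2 by ring]
  ring

def icentralBinom (t : ℤ) : ℚ := ibinom (2 * t) t

lemma icentralBinom_of_neg {t : ℤ} (ht : t < 0) : icentralBinom t = 0 :=
  ibinom_of_neg ht

lemma icentralBinom_zero : icentralBinom 0 = 1 := by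
  simpa [icentralBinom] using ibinom_natCast 0 0

/-- By the reflection principle, the number of `±1` paths of length `2N` from height `0` to
height `2q` that never go below `0`. -/
def ballot (q : ℤ) (N : ℕ) : ℚ := ibinom (2 * N) (N + q) - ibinom (2 * N) (N - q - 1)

lemma ballot_succ (q : ℤ) (N : ℕ) :
    ballot q (N + 1) = ballot (q - 1) N + 2 * ballot q N + ballot (q + 1) N := by
  unfold ballot
  push_cast
  rw [show 2 * ((N : ℤ) + 1) = 2 * N + 2 by ring, ibinom_add_two (by positivity),
    ibinom_add_two (by positivity)]
  ring_nf

lemma ballot_neg_one (N : ℕ) : ballot (-1) N = -ballot 0 N := by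
  unfold ballot
  ring_nf

lemma ballot_zero_right {q : ℤ} (hq : 0 ≤ q) : ballot q 0 = if q = 0 then 1 else 0 := by
  unfold ballot
  split_ifs with h
  · subst h; simpa [ibinom_of_neg] using ibinom_natCast 0 0
  · simp [ibinom_of_lt (show (0 : ℤ) < q by omega), ibinom_of_neg (show -q - 1 < 0 by omega)]

lemma ballot_of_lt {q : ℤ} {N : ℕ} (hN : (N : ℤ) < q) : ballot q N = 0 := by
  unfold ballot
  rw [ibinom_of_lt (by omega), ibinom_of_neg (by omega), sub_zero]

def ballotConv (q : ℤ) (K : ℕ) : ℚ :=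
  ∑ N ∈ range (K + 1), ballot q N * icentralBinom (K - N)

lemma ballotConv_succ (q : ℤ) (K : ℕ) :
    ballotConv q (K + 1) = ballot q 0 * icentralBinom (K + 1) + ballotConv (q - 1) K
      + 2 * ballotConv q K + ballotConv (q + 1) K := by
  have hstep : ∀ N ∈ range (K + 1),
      ballot q (N + 1) * icentralBinom ((K + 1 : ℕ) - (N + 1 : ℕ)) =
        ballot (q - 1) N * icentralBinom (K - N) + 2 * (ballot q N * icentralBinom (K - N)) +
          ballot (q + 1) N * icentralBinom (K - N) := fun N _ => by
    rw [ballot_succ, show ((K + 1 : ℕ) : ℤ) - (N + 1 : ℕ) = K - N by push_cast; ring]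
    ring
  rw [ballotConv, sum_range_succ', sum_congr rfl hstep, sum_add_distrib, sum_add_distrib,
    ← mul_sum]
  push_cast
  rw [sub_zero, ballotConv, ballotConv, ballotConv]
  ring

lemma ballotConv_neg_one (K : ℕ) : ballotConv (-1) K = -ballotConv 0 K := by
  simp [ballotConv, ballot_neg_one, sum_neg_distrib]

/-- Combinatorially: split a path of length `2K+1` ending at height `2q+1` at its last visit
to `0`. -/
theorem ballotConv_eq {q : ℤ} (hq : 0 ≤ q) (K : ℕ) :
    ballotConv q K = ibinom (2 * K + 1) (K - q) := by
  induction K generalizing q with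
  | zero =>
    rw [ballotConv, sum_range_one, ballot_zero_right hq]
    split_ifs with h
    · subst h; simpa [icentralBinom_zero] using (ibinom_natCast 1 0).symm
    · rw [zero_mul, ibinom_of_neg (by omega)]
  | succ K ih =>
    rw [ballotConv_succ, ballot_zero_right hq]
    push_cast
    rw [show 2 * ((K : ℤ) + 1) + 1 = 2 * K + 1 + 2 by ring, ibinom_add_two (by positivity)]
    rcases hq.eq_or_lt with rfl | hq
    · rw [if_pos rfl, zero_sub, ballotConv_neg_one, zero_add, ih le_rfl, ih zero_le_one,
        icentralBinom, show 2 * ((K : ℤ) + 1) = 2 * K + 1 + 1 by ring,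
        ibinom_succ (by positivity)]
      ring_nf
    · rw [if_neg hq.ne', ih (by omega), ih hq.le, ih (by omega)]
      ring_nf

def centralBinomToeplitz (n : ℕ) : Matrix (Fin n) (Fin n) ℚ :=
  Matrix.of fun i j => icentralBinom ((j : ℤ) - i)

lemma det_centralBinomToeplitz (n : ℕ) : (centralBinomToeplitz n).det = 1 := by
  rw [Matrix.det_of_isUpperTriangular]
  · simp [centralBinomToeplitz, icentralBinom_zero]
  · intro i j hij
    change j < i at hij
    exact icentralBinom_of_neg (by rw [Fin.lt_def] at hij; omega)

lemma ballot_mul_centralBinomToeplitz {q : ℤ} (hq : 0 ≤ q) (n : ℕ) :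
    (Matrix.of fun (_ : Fin 1) (l : Fin n) => ballot q l) * centralBinomToeplitz n =
      Matrix.of fun (_ : Fin 1) (j : Fin n) => ibinom (2 * (j : ℤ) + 1) (j - q) := by
  ext i j
  rw [Matrix.mul_apply, Matrix.of_apply, ← ballotConv_eq hq, ballotConv]
  simp only [centralBinomToeplitz, Matrix.of_apply]
  rw [Fin.sum_univ_eq_sum_range (fun l => ballot q l * icentralBinom ((j : ℤ) - l))]
  refine (sum_subset (range_subset_range.2 j.isLt) fun l _ hl => ?_).symm
  rw [icentralBinom_of_neg (by rw [mem_range, not_lt] at hl; omega), mul_zero]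

theorem Matrix.det_fromBlocks_mul₁₂ {m n R : Type*} [Fintype m] [Fintype n] [DecidableEq m]
    [DecidableEq n] [CommRing R] (A : Matrix m m R) (S : Matrix m n R) (C : Matrix n m R)
    (D : Matrix n n R) :
    (fromBlocks A (S * D) C D).det = (A - S * C).det * D.det := by
  have : fromBlocks A (S * D) C D = fromBlocks 1 S 0 1 * fromBlocks (A - S * C) 0 C D := by
    simp [fromBlocks_multiply]
  rw [this, det_mul, det_fromBlocks_zero₂₁, det_fromBlocks_zero₁₂]
  simp

lemma sum_range_eq_sum_range_sub {M : Type*} [AddCommMonoid M] {f : ℕ → M} {m : ℕ}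
    (hf : ∀ N < m, f N = 0) (n : ℕ) :
    ∑ N ∈ range n, f N = ∑ i ∈ range (n - m), f (m + i) := by
  rw [← sum_Ico_eq_sum_range]
  refine (sum_subset (fun N hN => ?_) fun N hN hN' => hf N ?_).symm <;>
    simp only [mem_Ico, mem_range, not_and, not_lt] at * <;> omega

lemma Qmat_one_submatrix_finSumFinEquiv (b c d : ℕ) {p : ℤ} (hp : p ≤ 0) :
    (Qmat 1 b c d p).submatrix finSumFinEquiv finSumFinEquiv =
      Matrix.fromBlocks (Matrix.of fun _ _ => ibinom ((b : ℤ) + c) c)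
        ((Matrix.of fun (_ : Fin 1) (l : Fin d) => ballot (-p) l) * centralBinomToeplitz d)
        (Matrix.of fun (i : Fin d) (_ : Fin 1) => ibinom ((b : ℤ) + c - 2 * i - 1) (c - i - p))
        (centralBinomToeplitz d) := by
  rw [ballot_mul_centralBinomToeplitz (by omega)]
  ext (i | i) (j | j) <;>
    simp only [Matrix.submatrix_apply, Matrix.fromBlocks_apply₁₁, Matrix.fromBlocks_apply₁₂,
      Matrix.fromBlocks_apply₂₁, Matrix.fromBlocks_apply₂₂, finSumFinEquiv_apply_left,
      finSumFinEquiv_apply_right, Qmat, centralBinomToeplitz, icentralBinom, Matrix.of_apply,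
      Fin.val_castAdd, Fin.val_natAdd, Fin.val_eq_zero] <;>
    split_ifs <;> first | omega | (congr 1 <;> push_cast <;> ring)

lemma sum_ballot_mul_ibinom (b c d : ℕ) {p : ℤ} (hp : p ≤ 0) :
    ∑ j : Fin d, ballot (-p) j * ibinom ((b : ℤ) + c - 2 * j - 1) (c - j - p) =
      ∑ i ∈ range ((d : ℤ) + p).toNat,
        ibinom ((b : ℤ) + c - 2 * ((i : ℤ) - p) - 1) ((b : ℤ) + 2 * p - (i : ℤ) - 1) *
          (ibinom (2 * ((i : ℤ) - p)) ((i : ℤ) - 2 * p) -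
            ibinom (2 * ((i : ℤ) - p)) ((i : ℤ) - 1)) := by
  rw [Fin.sum_univ_eq_sum_range
      (fun j => ballot (-p) j * ibinom ((b : ℤ) + c - 2 * j - 1) (c - j - p)),
    sum_range_eq_sum_range_sub (m := (-p).toNat)
      (fun N hN => by rw [ballot_of_lt (by omega), zero_mul]),
    show d - (-p).toNat = ((d : ℤ) + p).toNat by omega]
  refine sum_congr rfl fun i _ => ?_
  rw [ballot, show (((-p).toNat + i : ℕ) : ℤ) = i - p by push_cast; omega, mul_comm,
    ← ibinom_symm _ ((c : ℤ) - (i - p) - p)]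
  congr 2
  · ring
  all_goals congr 1; ring

theorem E_one_reflection_general (b c d : ℕ) (p : ℤ) (hp : p ≤ 0) :
    E 1 b c d p =
      ibinom ((b : ℤ) + c) (b : ℤ) -
        ∑ i ∈ Finset.range ((d : ℤ) + p).toNat,
          ibinom ((b : ℤ) + c - 2 * ((i : ℤ) - p) - 1) ((b : ℤ) + 2 * p - (i : ℤ) - 1) *
            (ibinom (2 * ((i : ℤ) - p)) ((i : ℤ) - 2 * p) -
              ibinom (2 * ((i : ℤ) - p)) ((i : ℤ) - 1)) := by
  rw [E, ← Matrix.det_submatrix_equiv_self finSumFinEquiv,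
    Qmat_one_submatrix_finSumFinEquiv b c d hp, Matrix.det_fromBlocks_mul₁₂,
    det_centralBinomToeplitz, mul_one, Matrix.det_unique,
    ← sum_ballot_mul_ibinom b c d hp, ← ibinom_symm _ (b : ℤ), add_sub_cancel_left]
  simp only [Matrix.sub_apply, Matrix.mul_apply, Matrix.of_apply]

/-- Reflection principle: explicit formula for `E(1,b,c,d,p)` for `p ≤ 0` and
`2d ≤ b+c+1`. -/
theorem E_one_reflection (b c d : ℕ) (p : ℤ) (hp : p ≤ 0) (hd : 2 * d ≤ b + c + 1) :
    E 1 b c d p =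
      ibinom ((b : ℤ) + c) (b : ℤ) -
        ∑ i ∈ Finset.range ((d : ℤ) + p).toNat,
          ibinom ((b : ℤ) + c - 2 * ((i : ℤ) - p) - 1) ((b : ℤ) + 2 * p - (i : ℤ) - 1) *
            (ibinom (2 * ((i : ℤ) - p)) ((i : ℤ) - 2 * p) -
              ibinom (2 * ((i : ℤ) - p)) ((i : ℤ) - 1)) :=
  E_one_reflection_general b c d p hp
end
end

section
/- Let a, b, c be nonnegative integers with a ≤ b + 1. Define the a×a matrices over ℚ, indexed by i,j ∈ {1,…,a}: M_{i,j} := C(b+c, b+i−j); L_{i,j} := (−1)^{i+j} · C(i−1, j−1) · (c)_{i−j} / (b+j)_{i−j} for i ≥ j and L_{i,j} := 0 for i < j; U_{i,j} := (j−i+1)_{i−1} · b!·(b+c+i−1)! / ( (b+i−1)!·(c+j−1)!·(b+i−j)! ). Then U = L·M. In particular, L is lower triangular with 1's on the diagonal, U is upper triangular, and det M = det U = ∏_{i=0}^{a−1} i!·(b+c+i)!/((b+i)!·(c+i)!). -/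
/-!
Put `F(i, k) = L i k * M k j` for a fixed column `j ≤ b`. The row sums `∑ₖ F(i, k)` are
evaluated by induction on `i` with a Wilf–Zeilberger pair: for `k ≤ i`,
`F(i+1, k) - ρᵢ F(i, k) = G(k+1) - G(k)` with `ρᵢ = U (i+1) j / U i j` and
`G(k) = -k (k+b-j) / ((i+1)(b+i+1-j)) · F(i+1, k)`, which follows from the ratios
`F(i+1, k) / F(i, k)` and `F(i+1, k+1) / F(i, k)` of hypergeometric terms. Summing over `k`
telescopes (`G(0) = 0` and `G(i+1) = -F(i+1, i+1)`), so the row sums satisfy the same first-order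
recurrence as `U i j`. Then `L` is unitriangular and `U` triangular with diagonal entries the
factors of MacMahon's product, which gives both determinants.
-/

open Finset

noncomputable section

open scoped Nat

lemma poch_succ (x : ℚ) (n : ℕ) : poch x (n + 1) = poch x n * (x + n) :=
  ascPochhammer_succ_eval n x

lemma poch_succ' (x : ℚ) (n : ℕ) : poch x (n + 1) = x * poch (x + 1) n := by
  simp [poch, ascPochhammer_succ_left, Polynomial.eval_comp]

lemma poch_one (n : ℕ) : poch 1 n = n ! := ascPochhammer_eval_one ℚ n

lemma poch_pos {x : ℚ} (hx : 0 < x) (n : ℕ) : 0 < poch x n := ascPochhammer_pos n x hx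

lemma poch_neg_natCast_of_lt {m n : ℕ} (h : m < n) : poch (-m) n = 0 :=
  ascPochhammer_eval_neg_coe_nat_of_lt h

lemma ibinom_natCast_s13 {n k : ℕ} (h : k ≤ n) : ibinom n k = n.choose k := by
  simp [ibinom, h]

lemma ibinom_succ_mul (n m : ℤ) : ibinom n (m + 1) * (m + 1) = ibinom n m * (n - m) := by
  by_cases hm : 0 ≤ m ∧ m + 1 ≤ n
  · obtain ⟨n, rfl⟩ := Int.eq_ofNat_of_zero_le (hm.1.trans (by omega) : (0 : ℤ) ≤ n)
    obtain ⟨m, rfl⟩ := Int.eq_ofNat_of_zero_le hm.1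
    have hmn : m + 1 ≤ n := by omega
    rw [ibinom_natCast_s13 (by omega), show (m : ℤ) + 1 = ((m + 1 : ℕ) : ℤ) by push_cast; ring,
      ibinom_natCast_s13 hmn]
    have := congrArg (Nat.cast (R := ℚ)) (Nat.choose_succ_right_eq n m)
    push_cast [Nat.cast_sub (by omega : m ≤ n)] at this ⊢
    exact this
  · rcases not_and_or.mp hm with hm | hm
    · obtain rfl | hm := eq_or_ne m (-1)
      · simp [ibinom]
      · simp [ibinom, show ¬ 0 ≤ m + 1 by omega, show ¬ 0 ≤ m by omega]
    · obtain rfl | hm' := eq_or_ne m n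
      · simp [ibinom]
      · simp [ibinom, show ¬ m + 1 ≤ n by omega, show ¬ m ≤ n by omega]

namespace MacMahonLU

variable (b c : ℕ)

/- The entries of `L`, `M`, `U` with `0`-based indices, extended to all of `ℕ × ℕ`. -/

def lEntry (i k : ℕ) : ℚ :=
  if k ≤ i then
    (-1 : ℚ) ^ (i + k) * (i.choose k : ℚ) * poch (c : ℚ) (i - k) /
      poch ((b : ℚ) + (k + 1)) (i - k)
  else 0

def mEntry (k j : ℕ) : ℚ :=
  ibinom ((b : ℤ) + c) ((b : ℤ) + ((k : ℤ) + 1) - ((j : ℤ) + 1))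

def uEntry (i j : ℕ) : ℚ :=
  poch ((j : ℚ) - (i : ℚ) + 1) i * (b ! : ℚ) * ((b + c + i) ! : ℚ) /
    (((b + i) ! : ℚ) * ((c + j) ! : ℚ) * ((b + i - j) ! : ℚ))

variable {b c}

lemma lEntry_of_lt {i k : ℕ} (h : i < k) : lEntry b c i k = 0 := by
  simp [lEntry, Nat.not_le.mpr h]

lemma lEntry_self (i : ℕ) : lEntry b c i i = 1 := by
  simp [lEntry, poch, ← two_mul]

lemma lEntry_succ_left {i k : ℕ} (hk : k ≤ i) :
    lEntry b c (i + 1) k * (((i : ℚ) + 1 - k) * (b + i + 1)) =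
      -(((i : ℚ) + 1) * (c + i - k)) * lEntry b c i k := by
  have hpos : 0 < poch ((b : ℚ) + (k + 1)) (i - k) := poch_pos (by positivity) _
  have hchoose := congrArg (Nat.cast (R := ℚ)) (Nat.choose_mul_succ_eq i k)
  push_cast [Nat.cast_sub (by omega : k ≤ i + 1)] at hchoose
  simp only [lEntry, if_pos hk, if_pos (by omega : k ≤ i + 1),
    show i + 1 - k = i - k + 1 by omega, poch_succ, pow_succ, show i + 1 + k = i + k + 1 by omega]
  push_cast [Nat.cast_sub hk]
  rw [show (b : ℚ) + (k + 1) + (i - k) = b + i + 1 by ring]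
  field_simp
  linear_combination poch (c : ℚ) (i - k) * (c + i - k) * hchoose

lemma lEntry_succ_succ {i k : ℕ} (hk : k ≤ i) :
    lEntry b c (i + 1) (k + 1) * (((k : ℚ) + 1) * (b + i + 1)) =
      ((i : ℚ) + 1) * (b + k + 1) * lEntry b c i k := by
  have hpos : 0 < poch ((b : ℚ) + (k + 1)) (i - k) := poch_pos (by positivity) _
  have hchoose := congrArg (Nat.cast (R := ℚ)) (Nat.add_one_mul_choose_eq i k)
  have hshift := (poch_succ ((b : ℚ) + (k + 1)) (i - k)).symm.trans (poch_succ' _ _)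
  push_cast [Nat.cast_sub hk] at hchoose hshift
  simp only [lEntry, if_pos hk, if_pos (by omega : k + 1 ≤ i + 1), Nat.add_sub_add_right,
    pow_succ, show i + 1 + (k + 1) = i + k + 1 + 1 by omega]
  push_cast
  rw [show (b : ℚ) + (k + 1 + 1) = b + (k + 1) + 1 by ring]
  have hpos' : 0 < poch ((b : ℚ) + (k + 1) + 1) (i - k) := poch_pos (by positivity) _
  field_simp
  linear_combination (-poch (c : ℚ) (i - k) * (b + i + 1) * poch ((b : ℚ) + (k + 1)) (i - k)) *
    hchoose + ((i : ℚ) + 1) * i.choose k * poch (c : ℚ) (i - k) * hshift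

lemma mEntry_succ_left (k j : ℕ) :
    mEntry b c (k + 1) j * ((b : ℚ) + k + 1 - j) = (c + j - k) * mEntry b c k j := by
  have := ibinom_succ_mul ((b : ℤ) + c) ((b : ℤ) + k - j)
  simp only [mEntry]
  push_cast at this ⊢
  rw [show (b : ℤ) + (k + 1 + 1) - (j + 1) = b + k - j + 1 by ring,
    show (b : ℤ) + (k + 1) - (j + 1) = b + k - j by ring]
  linear_combination this

section WZ

variable (b c j : ℕ)

def term (i k : ℕ) : ℚ := lEntry b c i k * mEntry b c k j

def wzRatio (i : ℕ) : ℚ := ((j : ℚ) - i) * (b + c + i + 1) / ((b + i + 1) * (b + i + 1 - j))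

def wzCert (i k : ℕ) : ℚ :=
  -((k : ℚ) * (k + b - j)) / ((i + 1) * (b + i + 1 - j)) * term b c j (i + 1) k

variable {b c j}

lemma term_succ_sub_eq_wzCert_sub {i k : ℕ} (hj : j ≤ b) (hk : k ≤ i) :
    term b c j (i + 1) k - wzRatio b c j i * term b c j i k =
      wzCert b c j i (k + 1) - wzCert b c j i k := by
  have hjb : (j : ℚ) ≤ b := by exact_mod_cast hj
  have hki : (k : ℚ) ≤ i := by exact_mod_cast hk
  have h₁ : (i : ℚ) + 1 - k ≠ 0 := by linarith
  have h₂ : (b : ℚ) + i + 1 ≠ 0 := by positivity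
  have h₃ : (b : ℚ) + k + 1 - j ≠ 0 := by linarith [(k.cast_nonneg : (0 : ℚ) ≤ k)]
  have h₄ : (b : ℚ) + i + 1 - j ≠ 0 := by linarith [(i.cast_nonneg : (0 : ℚ) ≤ i)]
  have hrow : term b c j (i + 1) k =
      -(((i : ℚ) + 1) * (c + i - k)) / ((i + 1 - k) * (b + i + 1)) * term b c j i k := by
    rw [div_mul_eq_mul_div, eq_div_iff (by positivity), term, term, mul_right_comm,
      lEntry_succ_left hk]
    ring
  have hdiag : term b c j (i + 1) (k + 1) =
      ((i : ℚ) + 1) * (b + k + 1) * (c + j - k) / ((k + 1) * (b + i + 1) * (b + k + 1 - j)) *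
        term b c j i k := by
    rw [div_mul_eq_mul_div, eq_div_iff (by positivity), term, term]
    linear_combination
      mEntry b c (k + 1) j * ((b : ℚ) + k + 1 - j) * lEntry_succ_succ (b := b) (c := c) hk +
        ((i : ℚ) + 1) * (b + k + 1) * lEntry b c i k * mEntry_succ_left (b := b) (c := c) k j
  simp only [wzCert, wzRatio, hdiag, hrow]
  push_cast
  field_simp
  ring

lemma wzRatio_mul_uEntry {i : ℕ} (hj : j ≤ b) :
    wzRatio b c j i * uEntry b c i j = uEntry b c (i + 1) j := by
  have hjb : (j : ℚ) ≤ b := by exact_mod_cast hj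
  have h₁ : (b : ℚ) + i - j + 1 ≠ 0 := by linarith [(i.cast_nonneg : (0 : ℚ) ≤ i)]
  have h₂ : (b : ℚ) + i + 1 - j ≠ 0 := by linarith [(i.cast_nonneg : (0 : ℚ) ≤ i)]
  simp only [uEntry, wzRatio]
  rw [show b + c + (i + 1) = b + c + i + 1 by ring, show b + (i + 1) = b + i + 1 by ring,
    show b + i + 1 - j = b + i - j + 1 by omega, Nat.factorial_succ, Nat.factorial_succ,
    Nat.factorial_succ, poch_succ']
  push_cast [Nat.cast_sub (show j ≤ b + i by omega)]
  rw [show (j : ℚ) - (i + 1) + 1 + 1 = j - i + 1 by ring]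
  field_simp
  ring

lemma sum_term_eq_uEntry (hj : j ≤ b) (i : ℕ) :
    ∑ k ∈ range (i + 1), term b c j i k = uEntry b c i j := by
  induction i with
  | zero =>
    rw [sum_range_one, term, lEntry_self, one_mul, mEntry, uEntry]
    rw [show (b : ℤ) + ((0 : ℕ) + 1) - (j + 1) = ((b - j : ℕ) : ℤ) by
        push_cast [Nat.cast_sub hj]; ring,
      show (b : ℤ) + c = ((b + c : ℕ) : ℤ) by push_cast; ring, ibinom_natCast_s13 (by omega),
      Nat.cast_choose ℚ (by omega), show b + c - (b - j) = c + j by omega]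
    simp only [poch, ascPochhammer_zero, Polynomial.eval_one, add_zero, Nat.cast_zero, one_mul]
    field_simp
  | succ i ih =>
    have hcert_last : wzCert b c j i (i + 1) = -term b c j (i + 1) (i + 1) := by
      have hden : (b : ℚ) + i + 1 - j ≠ 0 := by
        have : (j : ℚ) ≤ b := by exact_mod_cast hj
        linarith [(i.cast_nonneg : (0 : ℚ) ≤ i)]
      rw [wzCert]
      push_cast
      field_simp
      ring
    have htel : ∑ k ∈ range (i + 1), term b c j (i + 1) k =
        wzRatio b c j i * ∑ k ∈ range (i + 1), term b c j i k +
          (wzCert b c j i (i + 1) - wzCert b c j i 0) := by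
      rw [mul_sum, ← sum_range_sub, ← sum_add_distrib]
      exact sum_congr rfl fun k hk ↦ by
        linear_combination term_succ_sub_eq_wzCert_sub hj (Nat.lt_succ_iff.mp (mem_range.mp hk))
    rw [sum_range_succ, htel, ih, wzRatio_mul_uEntry hj, hcert_last]
    simp [wzCert]

end WZ

lemma sum_range_term_eq_uEntry {i j n : ℕ} (hj : j ≤ b) (hi : i < n) :
    ∑ k ∈ range n, term b c j i k = uEntry b c i j := by
  rw [← sum_term_eq_uEntry hj i]
  exact (sum_subset (range_subset_range.2 hi) fun k _ hk ↦ by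
    rw [term, lEntry_of_lt (by simpa using hk), zero_mul]).symm

lemma uEntry_of_lt {i j : ℕ} (h : j < i) : uEntry b c i j = 0 := by
  have : (j : ℚ) - i + 1 = -((i - 1 - j : ℕ) : ℚ) := by
    push_cast [Nat.cast_sub (by omega : j ≤ i - 1), Nat.cast_sub (by omega : 1 ≤ i)]
    ring
  rw [uEntry, this, poch_neg_natCast_of_lt (by omega)]
  simp

lemma uEntry_self (i : ℕ) :
    uEntry b c i i = (i ! * (b + c + i)! : ℚ) / ((b + i)! * (c + i)!) := by
  rw [uEntry, sub_self, zero_add, poch_one, Nat.add_sub_cancel]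
  field_simp

end MacMahonLU

open MacMahonLU in
/-- LU-type triangularization of MacMahon's matrix: `U = L · M`, `L` is lower
unitriangular, `U` is upper triangular, and `det M = det U = M(a,b,c)`. -/
theorem macmahon_LU (a b c : ℕ) (hab : a ≤ b + 1) :
    let M : Matrix (Fin a) (Fin a) ℚ := Matrix.of fun i j =>
      ibinom ((b : ℤ) + c) ((b : ℤ) + (((i : ℕ) : ℤ) + 1) - (((j : ℕ) : ℤ) + 1))
    let L : Matrix (Fin a) (Fin a) ℚ := Matrix.of fun i j =>
      if (j : ℕ) ≤ (i : ℕ) then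
        (-1 : ℚ) ^ ((i : ℕ) + (j : ℕ)) * (Nat.choose (i : ℕ) (j : ℕ) : ℚ) *
          poch (c : ℚ) ((i : ℕ) - (j : ℕ)) / poch ((b : ℚ) + ((j : ℕ) + 1)) ((i : ℕ) - (j : ℕ))
      else 0
    let U : Matrix (Fin a) (Fin a) ℚ := Matrix.of fun i j =>
      poch (((j : ℕ) : ℚ) - ((i : ℕ) : ℚ) + 1) (i : ℕ) * (Nat.factorial b : ℚ) *
          (Nat.factorial (b + c + (i : ℕ)) : ℚ) /
        ((Nat.factorial (b + (i : ℕ)) : ℚ) * (Nat.factorial (c + (j : ℕ)) : ℚ) *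
          (Nat.factorial (b + (i : ℕ) - (j : ℕ)) : ℚ))
    U = L * M ∧
      (∀ i j : Fin a, i < j → L i j = 0) ∧ (∀ i : Fin a, L i i = 1) ∧
      (∀ i j : Fin a, j < i → U i j = 0) ∧
      M.det = macmahon a b c ∧ U.det = macmahon a b c := by
  intro M L U
  have hLM : U = L * M := by
    ext i j
    change uEntry b c i j = ∑ k : Fin a, term b c j i k
    rw [Fin.sum_univ_eq_sum_range (term b c j i), sum_range_term_eq_uEntry (by omega) i.isLt]
  have hL : L.IsLowerTriangular := fun i k hik ↦ lEntry_of_lt (b := b) (c := c) hik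
  have hU : U.IsUpperTriangular := fun i j hji ↦ uEntry_of_lt (b := b) (c := c) hji
  have hUdet : U.det = macmahon a b c := by
    rw [Matrix.det_of_isUpperTriangular hU, macmahon, ← Fin.prod_univ_eq_prod_range]
    exact prod_congr rfl fun i _ ↦ uEntry_self i
  have hLdiag (i : Fin a) : L i i = 1 := lEntry_self (b := b) (c := c) i
  refine ⟨hLM, fun i j h ↦ hL h, hLdiag, fun i j h ↦ hU h, ?_, hUdet⟩
  rw [← hUdet, hLM, Matrix.det_mul, Matrix.det_of_isLowerTriangular L hL]
  simp [hLdiag]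
end
end
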